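/- arXiv:1203.1716 — 2 statements merged into one kernel-verified Lean document; each statement's English description precedes it below -/
import Mathlib

section
/- Let R be a commutative ring, V an R-module, and K, L : V → V two R-linear maps. For a trilinear map B : V × V × V → R define (σ_K B)(X,Y,Z) = B(X, KY, Z) − B(X, KZ, Y), and for a trilinear map C define (τ_K C)(X,Y,Z) = C(KX, Y, Z) − C(KY, X, Z) + C(KZ, X, Y). If B is symmetric in its first two arguments, i.e. B(X,Y,Z) = B(Y,X,Z) for all X, Y, Z ∈ V, then τ_L(σ_K B) + τ_K(σ_L B) = 0 identically; in particular (taking K = L) τ_K(σ_K B) = 0. (This is the identity τ ∘ σ²(P) = 0 used in the construction of the obstruction map φ for the operator P = (d_J, d_h).) -/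
/-- The (model of the prolonged symbol) operator `σ_K` applied to a trilinear map `B`:
`(σ_K B)(X,Y,Z) = B(X, KY, Z) − B(X, KZ, Y)`. -/
def sigmaOp {R V : Type*} [CommRing R] [AddCommGroup V] [Module R V]
    (K : V →ₗ[R] V) (B : V →ₗ[R] V →ₗ[R] V →ₗ[R] R) : V → V → V → R :=
  fun X Y Z => B X (K Y) Z - B X (K Z) Y

/-- The alternating operator `τ_K` applied to a trilinear map `C`:
`(τ_K C)(X,Y,Z) = C(KX, Y, Z) − C(KY, X, Z) + C(KZ, X, Y)`. -/
def tauOp {R V : Type*} [CommRing R] [AddCommGroup V] [Module R V]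
    (K : V →ₗ[R] V) (C : V → V → V → R) : V → V → V → R :=
  fun X Y Z => C (K X) Y Z - C (K Y) X Z + C (K Z) X Y

/-- If the trilinear map `B` is symmetric in its first two arguments, then
`τ_L(σ_K B) + τ_K(σ_L B) = 0` identically; in particular `τ_K(σ_K B) = 0`.
(This is the identity `τ ∘ σ²(P) = 0` for the operator `P = (d_J, d_h)`.) -/
theorem stmt0 {R V : Type*} [CommRing R] [AddCommGroup V] [Module R V]
    (K L : V →ₗ[R] V) (B : V →ₗ[R] V →ₗ[R] V →ₗ[R] R)
    (hB : ∀ X Y Z, B X Y Z = B Y X Z) :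
    (∀ X Y Z, tauOp L (sigmaOp K B) X Y Z + tauOp K (sigmaOp L B) X Y Z = 0) ∧
    (∀ X Y Z, tauOp K (sigmaOp K B) X Y Z = 0) := by
  have main : ∀ X Y Z, tauOp L (sigmaOp K B) X Y Z + tauOp K (sigmaOp L B) X Y Z = 0 := by
    intro X Y Z
    simp only [tauOp, sigmaOp]
    rw [hB (L X) (K Y) Z, hB (L X) (K Z) Y, hB (L Y) (K X) Z, hB (L Y) (K Z) X,
        hB (L Z) (K X) Y, hB (L Z) (K Y) X, hB (K X) (L Y) Z, hB (K X) (L Z) Y,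
        hB (K Y) (L X) Z, hB (K Y) (L Z) X, hB (K Z) (L X) Y, hB (K Z) (L Y) X]
    ring
  refine ⟨main, fun X Y Z => ?_⟩
  simp only [tauOp, sigmaOp]
  rw [hB (K X) (K Y) Z, hB (K X) (K Z) Y, hB (K Y) (K Z) X]
  ring
end

section
/- Let g¹ denote the real vector space of bilinear forms A : V × V → ℝ that are semi-basic in the second argument and satisfy A(JX, Y) = A(JY, X) and A(hX, Y) = A(hY, X) for all X, Y ∈ V. Then g¹ is a linear subspace of the space of bilinear forms on V and its dimension over ℝ equals (n+1)². (This is the computation of the dimension of the kernel g¹(P) of the symbol σ¹(P) of the operator P = (d_J, d_h).) -/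
open Module

/-- Model of the tangent space of `J¹π` at a point: `V = ℝ^{n+1} × ℝ^n`, the first
factor spanned by the horizontal vectors `e_0, …, e_n` (`e_0` the time direction),
the second by the vertical vectors `f_1, …, f_n` (here `f_k = fbase ⟨k-1,_⟩`). -/
abbrev Vv (n : ℕ) : Type := (Fin (n + 1) → ℝ) × (Fin n → ℝ)

/-- A vector of `V` is vertical if it lies in the span of `f_1, …, f_n`,
i.e. its first component vanishes. -/
def IsVert {n : ℕ} (v : Vv n) : Prop := v.1 = 0

/-- The vertical endomorphism `J : V → V`: `J e_0 = 0`, `J e_i = f_i` (1 ≤ i ≤ n),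
`J f_i = 0`. -/
noncomputable def Jv (n : ℕ) : Vv n →ₗ[ℝ] Vv n :=
  LinearMap.prod 0
    ((LinearMap.funLeft ℝ ℝ Fin.succ).comp (LinearMap.fst ℝ (Fin (n + 1) → ℝ) (Fin n → ℝ)))

/-- The horizontal projector `h : V → V`: `h e_α = e_α` (0 ≤ α ≤ n), `h f_i = 0`. -/
noncomputable def Hv (n : ℕ) : Vv n →ₗ[ℝ] Vv n :=
  LinearMap.prod (LinearMap.fst ℝ (Fin (n + 1) → ℝ) (Fin n → ℝ)) 0

/-- `g¹(P)`: the space of bilinear forms `A` on `V` that are semi-basic in the second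
argument and satisfy `A(JX,Y) = A(JY,X)` and `A(hX,Y) = A(hY,X)`. -/
noncomputable def g1 (n : ℕ) : Submodule ℝ (Vv n →ₗ[ℝ] Vv n →ₗ[ℝ] ℝ) where
  carrier := { A | (∀ X v, IsVert v → A X v = 0) ∧
    (∀ X Y, A (Jv n X) Y = A (Jv n Y) X) ∧
    (∀ X Y, A (Hv n X) Y = A (Hv n Y) X) }
  add_mem' := by
    rintro A B ⟨a1, a2, a3⟩ ⟨b1, b2, b3⟩
    refine ⟨fun X v hv => ?_, fun X Y => ?_, fun X Y => ?_⟩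
    · simp [a1 X v hv, b1 X v hv]
    · simp only [LinearMap.add_apply]; rw [a2, b2]
    · simp only [LinearMap.add_apply]; rw [a3, b3]
  zero_mem' := by
    refine ⟨fun X v hv => ?_, fun X Y => ?_, fun X Y => ?_⟩ <;> simp
  smul_mem' := by
    rintro c A ⟨a1, a2, a3⟩
    refine ⟨fun X v hv => ?_, fun X Y => ?_, fun X Y => ?_⟩
    · simp [a1 X v hv]
    · simp only [LinearMap.smul_apply, smul_eq_mul]; rw [a2]
    · simp only [LinearMap.smul_apply, smul_eq_mul]; rw [a3]

/-!
A form `A ∈ g¹` only sees the horizontal component of its second argument. The `h`-condition says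
that its restriction `a` to horizontal vectors is symmetric. The `J`-condition says that
`(x, y) ↦ A (J x, y)` is a symmetric form on `ℝ^{n+1}`; it vanishes at `e₀` because `J e₀ = 0`, so
it is a symmetric form `c` on `ℝⁿ`. Conversely `A (X, Y) = a (X₁, Y₁) + c (X₂, tail Y₁)`, so `g¹` is
isomorphic to the product of the spaces of symmetric forms on `ℝ^{n+1}` and on `ℝⁿ`, and a symmetric
form is a function on unordered pairs of basis indices. Hence
`dim g¹ = C(n+2, 2) + C(n+1, 2) = (n+1)²`.
-/

theorem Nat.choose_two_add_choose_two (n : ℕ) :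
    (n + 2).choose 2 + (n + 1).choose 2 = (n + 1) ^ 2 := by
  induction n with
  | zero => rfl
  | succ k ih =>
    have hk : (k + 2).choose 2 = k + 1 + (k + 1).choose 2 := by
      rw [Nat.choose_succ_succ', Nat.choose_one_right]
    rw [Nat.choose_succ_succ' (k + 2) 1, Nat.choose_one_right]
    linarith

namespace Matrix

variable (K ι : Type*) [Semiring K]

def symmetricSubmodule : Submodule K (Matrix ι ι K) where
  carrier := {A | A.IsSymm}
  add_mem' := IsSymm.add
  zero_mem' := isSymm_zero
  smul_mem' c _ hA := hA.smul c

def symmetricSubmoduleEquivSym2 : symmetricSubmodule K ι ≃ₗ[K] (Sym2 ι → K) where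
  toFun A := Sym2.lift ⟨A.1, fun i j => (A.2.apply i j).symm⟩
  invFun f := ⟨Matrix.of fun i j => f s(i, j), IsSymm.ext fun i j => by simp [Sym2.eq_swap]⟩
  map_add' A B := by ext ⟨i, j⟩; rfl
  map_smul' c A := by ext ⟨i, j⟩; rfl
  left_inv A := by ext i j; rfl
  right_inv f := by ext ⟨i, j⟩; rfl

end Matrix

namespace LinearMap.BilinForm

variable (K M : Type*) [CommRing K] [AddCommGroup M] [Module K M]

def symmetricSubmodule : Submodule K (LinearMap.BilinForm K M) where
  carrier := {B | B.IsSymm}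
  add_mem' hB hC := hB.add hC
  zero_mem' := isSymm_zero
  smul_mem' c _ hB := hB.smul c

variable {K M} {ι : Type*} [Fintype ι] [DecidableEq ι]

theorem map_toMatrix_symmetricSubmodule (b : Basis ι K M) :
    (symmetricSubmodule K M).map (toMatrix b : LinearMap.BilinForm K M →ₗ[K] Matrix ι ι K) =
      Matrix.symmetricSubmodule K ι := by
  ext A
  rw [Submodule.mem_map_equiv, toMatrix_symm]
  exact Matrix.isSymm_toBilin_iff_isSymm b

noncomputable def symmetricSubmoduleEquivSym2 (b : Basis ι K M) :
    symmetricSubmodule K M ≃ₗ[K] (Sym2 ι → K) :=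
  ((toMatrix b).submoduleMap _).trans <|
    (LinearEquiv.ofEq _ _ (map_toMatrix_symmetricSubmodule b)).trans
      (Matrix.symmetricSubmoduleEquivSym2 K ι)

end LinearMap.BilinForm

namespace JetSymbol

variable {n : ℕ}

local notation "H" => Fin (n + 1) → ℝ
local notation "W" => Fin n → ℝ

noncomputable def tailₗ : H →ₗ[ℝ] W := LinearMap.funLeft ℝ ℝ Fin.succ

noncomputable def consZeroₗ : W →ₗ[ℝ] H := (0 : W →ₗ[ℝ] ℝ).vecCons LinearMap.id

lemma tailₗ_consZeroₗ (w : W) : tailₗ (consZeroₗ w) = w := rfl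

lemma Jv_apply (X : Vv n) : Jv n X = (0, tailₗ X.1) := rfl

lemma Hv_apply (X : Vv n) : Hv n X = (X.1, 0) := rfl

noncomputable def ofParts (a : LinearMap.BilinForm ℝ H) (c : LinearMap.BilinForm ℝ W) :
    LinearMap.BilinForm ℝ (Vv n) :=
  a.compl₁₂ (LinearMap.fst ℝ H W) (LinearMap.fst ℝ H W) +
    c.compl₁₂ (LinearMap.snd ℝ H W) (tailₗ ∘ₗ LinearMap.fst ℝ H W)

lemma ofParts_apply (a : LinearMap.BilinForm ℝ H) (c : LinearMap.BilinForm ℝ W) (X Y : Vv n) :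
    ofParts a c X Y = a X.1 Y.1 + c X.2 (tailₗ Y.1) := rfl

lemma ofParts_mem_g1 {a : LinearMap.BilinForm ℝ H} {c : LinearMap.BilinForm ℝ W}
    (ha : a.IsSymm) (hc : c.IsSymm) : ofParts a c ∈ g1 n := by
  refine ⟨fun X v hv => ?_, fun X Y => ?_, fun X Y => ?_⟩
  · rw [ofParts_apply, show v.1 = 0 from hv]
    simp
  · simp only [ofParts_apply, Jv_apply, map_zero, LinearMap.zero_apply, zero_add]
    exact hc.eq _ _
  · simp only [ofParts_apply, Hv_apply, map_zero, LinearMap.zero_apply, add_zero]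
    exact ha.eq _ _

noncomputable def horizontalPart (A : LinearMap.BilinForm ℝ (Vv n)) : LinearMap.BilinForm ℝ H :=
  A.compl₁₂ (LinearMap.inl ℝ H W) (LinearMap.inl ℝ H W)

noncomputable def verticalPart (A : LinearMap.BilinForm ℝ (Vv n)) : LinearMap.BilinForm ℝ W :=
  A.compl₁₂ (LinearMap.inr ℝ H W) (LinearMap.inl ℝ H W ∘ₗ consZeroₗ)

variable {A : LinearMap.BilinForm ℝ (Vv n)}

lemma isSymm_horizontalPart (hA : A ∈ g1 n) : (horizontalPart A).IsSymm :=
  ⟨fun x y => hA.2.2 (x, 0) (y, 0)⟩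

lemma isSymm_verticalPart (hA : A ∈ g1 n) : (verticalPart A).IsSymm :=
  ⟨fun w z => hA.2.1 (consZeroₗ w, 0) (consZeroₗ z, 0)⟩

lemma apply_inr_inl_of_tailₗ_eq_zero (hA : A ∈ g1 n) (w : W) {k : H} (hk : tailₗ k = 0) :
    A (0, w) (k, 0) = 0 := by
  have h := hA.2.1 (consZeroₗ w, 0) (k, 0)
  rw [Jv_apply, Jv_apply, hk, tailₗ_consZeroₗ, Prod.mk_zero_zero, map_zero] at h
  exact h

lemma ofParts_horizontalPart_verticalPart (hA : A ∈ g1 n) :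
    ofParts (horizontalPart A) (verticalPart A) = A := by
  refine LinearMap.ext fun X => LinearMap.ext fun Y => ?_
  have hsplit : ∀ Z : Vv n, Z = (Z.1, 0) + (0, Z.2) := fun Z => by simp
  have hY : A X Y = A X (Y.1, 0) := by
    conv_lhs => rw [hsplit Y, map_add, hA.1 X (0, Y.2) rfl, add_zero]
  have hX : A X (Y.1, 0) = A (X.1, 0) (Y.1, 0) + A (0, X.2) (Y.1, 0) := by
    conv_lhs => rw [hsplit X, map_add, LinearMap.add_apply]
  have hcons : A (0, X.2) (Y.1, 0) = A (0, X.2) (consZeroₗ (tailₗ Y.1), 0) := by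
    refine sub_eq_zero.1 ?_
    rw [← map_sub, Prod.mk_sub_mk, sub_zero]
    exact apply_inr_inl_of_tailₗ_eq_zero hA X.2 (by rw [map_sub, tailₗ_consZeroₗ, sub_self])
  rw [ofParts_apply, hY, hX, hcons]
  rfl

noncomputable def g1EquivSymmetric :
    g1 n ≃ₗ[ℝ] LinearMap.BilinForm.symmetricSubmodule ℝ H ×
      LinearMap.BilinForm.symmetricSubmodule ℝ W where
  toFun A :=
    (⟨horizontalPart A, isSymm_horizontalPart A.2⟩, ⟨verticalPart A, isSymm_verticalPart A.2⟩)
  invFun ac := ⟨ofParts ac.1.1 ac.2.1, ofParts_mem_g1 ac.1.2 ac.2.2⟩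
  map_add' A B := rfl
  map_smul' c A := rfl
  left_inv A := Subtype.ext (ofParts_horizontalPart_verticalPart A.2)
  right_inv ac := by
    ext x y
    · simp [horizontalPart, ofParts_apply]
    · simp [verticalPart, ofParts_apply, tailₗ_consZeroₗ]

end JetSymbol

theorem stmt1_general (n : ℕ) : Module.finrank ℝ (g1 n) = (n + 1) ^ 2 := by
  let e := JetSymbol.g1EquivSymmetric.trans <|
    (LinearMap.BilinForm.symmetricSubmoduleEquivSym2 (Pi.basisFun ℝ (Fin (n + 1)))).prodCongr
      (LinearMap.BilinForm.symmetricSubmoduleEquivSym2 (Pi.basisFun ℝ (Fin n)))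
  rw [e.finrank_eq, finrank_prod, finrank_fintype_fun_eq_card, finrank_fintype_fun_eq_card,
    Sym2.card, Sym2.card, Fintype.card_fin, Fintype.card_fin, Nat.choose_two_add_choose_two]

/-- The kernel `g¹(P)` of the symbol `σ¹(P)` of `P = (d_J, d_h)` is a linear subspace
of the bilinear forms on `V` of dimension `(n+1)²` over `ℝ`. -/
theorem stmt1 (n : ℕ) (hn : 1 ≤ n) : Module.finrank ℝ (g1 n) = (n + 1) ^ 2 :=
  stmt1_general n
end
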